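/- For every λ ∈ ℂ, a bilinear form θ on M³₀₅(λ) is a Moufang cocycle (θ ∈ Z²(M³₀₅(λ),ℂ)) if and only if θ lies in the linear span of Δ₁₁, Δ₁₂, Δ₂₁, Δ₂₂; and θ is a coboundary (θ(x,y) = f(x·y) for some ℂ-linear f : M³₀₅(λ) → ℂ) if and only if θ is a scalar multiple of λΔ₁₁ + Δ₂₁ + Δ₂₂. -/

import Mathlib

/-- The multiplication of `M³₀₅(λ)` on `ℂ³` (basis `e₁ = coord 0`, `e₂ = coord 1`,
`e₃ = coord 2`): `e₁e₁ = λe₃`, `e₂e₁ = e₃`, `e₂e₂ = e₃`, all other products of basis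
vectors zero. -/
def m305mul (lam : ℂ) (x y : Fin 3 → ℂ) : Fin 3 → ℂ :=
  ![0, 0, lam * (x 0 * y 0) + x 1 * y 0 + x 1 * y 1]

/-- The bilinear form `Δᵢⱼ` on `ℂ³` with `Δᵢⱼ(e_l, e_k) = δᵢl·δⱼk`. -/
noncomputable def delta3 (i j : Fin 3) : (Fin 3 → ℂ) →ₗ[ℂ] (Fin 3 → ℂ) →ₗ[ℂ] ℂ :=
  LinearMap.mk₂ ℂ (fun x y => x i * y j)
    (fun m₁ m₂ n => by simp [add_mul])
    (fun c m n => by simp only [Pi.smul_apply, smul_eq_mul]; ring)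
    (fun m n₁ n₂ => by simp [mul_add])
    (fun c m n => by simp only [Pi.smul_apply, smul_eq_mul]; ring)

/-- The four Moufang cocycle conditions for a bilinear form `θ` with respect to a
multiplication `m` on `ℂ³`. -/
def IsMoufangCocycleOn (m : (Fin 3 → ℂ) → (Fin 3 → ℂ) → (Fin 3 → ℂ))
    (θ : (Fin 3 → ℂ) →ₗ[ℂ] (Fin 3 → ℂ) →ₗ[ℂ] ℂ) : Prop :=
  (∀ x y z, θ (m x y) z - θ x (m y z) + θ (m z y) x - θ z (m y x) = 0) ∧
  (∀ x y z t, θ (m (m x y) z) t + θ (m (m z y) x) t = θ x (m y (m z t)) + θ z (m y (m x t))) ∧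
  (∀ x y z t, θ t (m x (m y z)) + θ t (m z (m y x)) = θ (m (m t x) y) z + θ (m (m t z) y) x) ∧
  (∀ x y z t, θ (m x y) (m t z) + θ (m z y) (m t x) = θ (m x (m y t)) z + θ (m z (m y t)) x)

/-! The product of `M³₀₅(λ)` is `xy = p(x, y) e₃` with `p = λΔ₁₁ + Δ₂₁ + Δ₂₂`. Every term of the
Moufang identities has a product, hence a multiple of `e₃`, in one slot of `θ`, so they all hold
once `θ(e₃, ·) = θ(·, e₃) = 0`; conversely a few instances of the first identity at basis vectors
force this vanishing, which describes the span of `Δ₁₁, Δ₁₂, Δ₂₁, Δ₂₂`. A coboundary is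
`f(xy) = f(e₃) p(x, y)`, and every multiple of `p` arises, from a functional with `f(e₃) = 1`. -/

section SmulVector

variable {K V : Type*} [Field K] [AddCommGroup V] [Module K V]

theorem exists_eq_comp_smul_iff_eq_smul {v : V} (hv : v ≠ 0) (B θ : V →ₗ[K] V →ₗ[K] K) :
    (∃ f : V →ₗ[K] K, ∀ x y, θ x y = f (B x y • v)) ↔ ∃ c : K, θ = c • B := by
  constructor
  · rintro ⟨f, hf⟩
    refine ⟨f v, LinearMap.ext₂ fun x y => ?_⟩
    rw [hf, map_smul, smul_eq_mul, LinearMap.smul_apply, LinearMap.smul_apply, smul_eq_mul,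
      mul_comm]
  · rintro ⟨c, rfl⟩
    obtain ⟨φ, hφ⟩ := Module.Projective.exists_dual_eq_one K hv
    exact ⟨c • φ, fun x y => by simp [hφ, mul_comm]⟩

end SmulVector

theorem isMoufangCocycleOn_of_mul_eq_smul {m : (Fin 3 → ℂ) → (Fin 3 → ℂ) → (Fin 3 → ℂ)}
    {B : (Fin 3 → ℂ) → (Fin 3 → ℂ) → ℂ} {v : Fin 3 → ℂ} (hm : ∀ x y, m x y = B x y • v)
    {θ : (Fin 3 → ℂ) →ₗ[ℂ] (Fin 3 → ℂ) →ₗ[ℂ] ℂ} (hθ : θ v = 0) (hθ' : θ.flip v = 0) :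
    IsMoufangCocycleOn m θ := by
  have hθ'' : ∀ x, θ x v = 0 := fun x => LinearMap.congr_fun hθ' x
  simp [IsMoufangCocycleOn, hm, hθ, hθ'']

@[simp]
theorem delta3_apply (i j : Fin 3) (x y : Fin 3 → ℂ) : delta3 i j x y = x i * y j := rfl

noncomputable def m305form (lam : ℂ) : (Fin 3 → ℂ) →ₗ[ℂ] (Fin 3 → ℂ) →ₗ[ℂ] ℂ :=
  lam • delta3 0 0 + delta3 1 0 + delta3 1 1

theorem m305mul_eq_smul_single (lam : ℂ) (x y : Fin 3 → ℂ) :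
    m305mul lam x y = m305form lam x y • Pi.single 2 1 := by
  funext i
  fin_cases i <;> simp [m305mul, m305form]

theorem mem_span_delta3_iff (θ : (Fin 3 → ℂ) →ₗ[ℂ] (Fin 3 → ℂ) →ₗ[ℂ] ℂ) :
    θ ∈ Submodule.span ℂ
        ({delta3 0 0, delta3 0 1, delta3 1 0, delta3 1 1} :
          Set ((Fin 3 → ℂ) →ₗ[ℂ] (Fin 3 → ℂ) →ₗ[ℂ] ℂ)) ↔
      θ (Pi.single 2 1) = 0 ∧ θ.flip (Pi.single 2 1) = 0 := by
  constructor
  · intro hθ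
    have hspan : Submodule.span ℂ
        ({delta3 0 0, delta3 0 1, delta3 1 0, delta3 1 1} :
          Set ((Fin 3 → ℂ) →ₗ[ℂ] (Fin 3 → ℂ) →ₗ[ℂ] ℂ)) ≤
        LinearMap.ker (LinearMap.applyₗ (Pi.single 2 1 : Fin 3 → ℂ)) ⊓
          LinearMap.ker (LinearMap.applyₗ (Pi.single 2 1 : Fin 3 → ℂ) ∘ₗ
            LinearMap.lflip.toLinearMap) := by
      rw [Submodule.span_le]
      rintro _ (rfl | rfl | rfl | rfl) <;> constructor <;> ext <;> simp
    simpa using hspan hθ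
  · rintro ⟨hθ, hθ'⟩
    have hθ'' : ∀ x, θ x (Pi.single 2 1) = 0 := fun x => LinearMap.congr_fun hθ' x
    have hexpand : θ = θ (Pi.single 0 1) (Pi.single 0 1) • delta3 0 0
        + θ (Pi.single 0 1) (Pi.single 1 1) • delta3 0 1
        + θ (Pi.single 1 1) (Pi.single 0 1) • delta3 1 0
        + θ (Pi.single 1 1) (Pi.single 1 1) • delta3 1 1 := by
      refine LinearMap.ext_basis (Pi.basisFun ℂ (Fin 3)) (Pi.basisFun ℂ (Fin 3)) fun i j => ?_
      fin_cases i <;> fin_cases j <;> simp [hθ, hθ'']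
    rw [hexpand]
    refine add_mem (add_mem (add_mem ?_ ?_) ?_) ?_ <;>
      exact Submodule.smul_mem _ _ (Submodule.subset_span (by simp))

theorem IsMoufangCocycleOn.m305_single_two_eq_zero {lam : ℂ}
    {θ : (Fin 3 → ℂ) →ₗ[ℂ] (Fin 3 → ℂ) →ₗ[ℂ] ℂ} (h : IsMoufangCocycleOn (m305mul lam) θ) :
    θ (Pi.single 2 1) = 0 ∧ θ.flip (Pi.single 2 1) = 0 := by
  have F : ∀ i j k : Fin 3, _ := fun i j k => h.1 (Pi.single i 1) (Pi.single j 1) (Pi.single k 1)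
  have h101 := F 1 0 1
  have h102 := F 1 0 2
  have h010 := F 0 1 0
  have h111 := F 1 1 1
  have h110 := F 1 1 0
  simp only [m305mul_eq_smul_single, m305form, LinearMap.add_apply, LinearMap.smul_apply,
    delta3_apply, ne_eq, zero_ne_one, one_ne_zero, not_false_eq_true, Pi.single_eq_of_ne,
    Pi.single_eq_same, Fin.reduceEq, mul_one, mul_zero, smul_eq_mul, zero_add, add_zero, one_smul,
    zero_smul, map_zero, LinearMap.zero_apply, sub_zero, zero_sub, add_self_eq_zero]
    at h101 h102 h010 h111 h110
  have hb0 : θ (Pi.single 0 1) (Pi.single 2 1) = 0 := by linear_combination -h010 / 2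
  have hb1 : θ (Pi.single 1 1) (Pi.single 2 1) = 0 := by linear_combination h101 - h111 / 2
  have ha0 : θ (Pi.single 2 1) (Pi.single 0 1) = 0 := by
    linear_combination h110 + hb1 + hb0
  constructor <;> refine (Pi.basisFun ℂ (Fin 3)).ext fun i => ?_ <;> fin_cases i <;> simpa

theorem isMoufangCocycleOn_m305mul_iff (lam : ℂ)
    (θ : (Fin 3 → ℂ) →ₗ[ℂ] (Fin 3 → ℂ) →ₗ[ℂ] ℂ) :
    IsMoufangCocycleOn (m305mul lam) θ ↔ θ (Pi.single 2 1) = 0 ∧ θ.flip (Pi.single 2 1) = 0 :=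
  ⟨IsMoufangCocycleOn.m305_single_two_eq_zero,
    fun h => isMoufangCocycleOn_of_mul_eq_smul (m305mul_eq_smul_single lam) h.1 h.2⟩

/-- For every `λ ∈ ℂ`: a bilinear form on `M³₀₅(λ)` is a Moufang cocycle iff it lies in the
span of `Δ₁₁, Δ₁₂, Δ₂₁, Δ₂₂`, and it is a coboundary iff it is a scalar multiple of
`λΔ₁₁ + Δ₂₁ + Δ₂₂`. -/
theorem m305_cocycles_and_coboundaries (lam : ℂ) (θ : (Fin 3 → ℂ) →ₗ[ℂ] (Fin 3 → ℂ) →ₗ[ℂ] ℂ) :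
    (IsMoufangCocycleOn (m305mul lam) θ ↔
      θ ∈ Submodule.span ℂ
        ({delta3 0 0, delta3 0 1, delta3 1 0, delta3 1 1} :
          Set ((Fin 3 → ℂ) →ₗ[ℂ] (Fin 3 → ℂ) →ₗ[ℂ] ℂ))) ∧
    ((∃ f : (Fin 3 → ℂ) →ₗ[ℂ] ℂ, ∀ x y, θ x y = f (m305mul lam x y)) ↔
      ∃ c : ℂ, θ = c • (lam • delta3 0 0 + delta3 1 0 + delta3 1 1)) := by
  refine ⟨(isMoufangCocycleOn_m305mul_iff lam θ).trans (mem_span_delta3_iff θ).symm, ?_⟩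
  simp_rw [m305mul_eq_smul_single]
  exact exists_eq_comp_smul_iff_eq_smul (Pi.single_ne_zero_iff.mpr one_ne_zero) _ θ
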